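/- (Theorem 4.1, entropy set, subcritical boundary data.) Let f : ℝ → ℝ be C² with f''(u) > 0 for every u, let u_* satisfy f'(u_*) = 0, and let u_B ≤ u_*. Then the set E^entropy(u_B) = { u₀ ∈ ℝ : F(u_B) + U'(u_B)·(f(u₀) − f(u_B)) ≥ F(u₀) for every convex entropy pair (U,F) } equals (−∞, u_*]. -/

import Mathlib

/-!
For `u₀ ≤ u_*` the defect `φ u = F u_B + U' u_B * (f u - f u_B) - F u` has derivative
`(U' u_B - U' u) * f' u`. Since `U'` is nondecreasing and `f' ≤ 0` left of `u_*`, `φ` decreases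
up to `u_B` and increases from `u_B` to `u_*`, so `φ ≥ φ u_B = 0` there.

For `u₀ > u_*`, take `U'` smooth, nondecreasing, zero on `(-∞, u_*]` and positive beyond, and
`F u = ∫_{u_*}^u U' f'`. Then `U' u_B = 0` and `F u_B = 0`, while `F u₀ > 0` because `f' > 0`
right of `u_*`: the entropy inequality fails.
-/

/-- The set of admissible boundary values based on the boundary entropy
inequalities: `u₀` is admissible iff for every convex entropy pair `(U,F)`
(`U` of class C² with `U'' ≥ 0`, `F` differentiable with `F' = U' f'`) one has
`F(u_B) + U'(u_B)(f(u₀) − f(u_B)) ≥ F(u₀)`. -/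
def entropySet (f : ℝ → ℝ) (uB : ℝ) : Set ℝ :=
  { u₀ : ℝ | ∀ U F : ℝ → ℝ, ContDiff ℝ 2 U → (∀ u, 0 ≤ deriv (deriv U) u) →
      Differentiable ℝ F → (∀ u, deriv F u = deriv U u * deriv f u) →
      F u₀ ≤ F uB + deriv U uB * (f u₀ - f uB) }

open Set intervalIntegral

theorem entropy_flux_le_of_deriv_nonpos {f U F : ℝ → ℝ} {c uB u₀ : ℝ}
    (hf : Differentiable ℝ f) (hF : Differentiable ℝ F)
    (hFU : ∀ u, deriv F u = deriv U u * deriv f u) (hU : Monotone (deriv U))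
    (hf' : ∀ u ≤ c, deriv f u ≤ 0) (huB : uB ≤ c) (hu₀ : u₀ ≤ c) :
    F u₀ ≤ F uB + deriv U uB * (f u₀ - f uB) := by
  set φ : ℝ → ℝ := fun u => F uB + deriv U uB * (f u - f uB) - F u
  have hφ : ∀ u, HasDerivAt φ ((deriv U uB - deriv U u) * deriv f u) u := fun u => by
    rw [sub_mul, ← hFU]
    exact (((hf u).hasDerivAt.sub_const _).const_mul _).const_add _ |>.sub (hF u).hasDerivAt
  have hφd : Differentiable ℝ φ := fun u => (hφ u).differentiableAt
  suffices φ uB ≤ φ u₀ by simpa [φ] using this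
  rcases le_total u₀ uB with h | h
  · refine antitoneOn_of_deriv_nonpos (convex_Iic uB) hφd.continuous.continuousOn
      hφd.differentiableOn (fun u hu => ?_) h self_mem_Iic h
    rw [interior_Iic] at hu
    rw [(hφ u).deriv]
    exact mul_nonpos_of_nonneg_of_nonpos (sub_nonneg.2 (hU hu.le)) (hf' u (hu.le.trans huB))
  · refine monotoneOn_of_deriv_nonneg (convex_Icc uB c) hφd.continuous.continuousOn
      hφd.differentiableOn (fun u hu => ?_) ⟨le_rfl, huB⟩ ⟨h, hu₀⟩ h
    rw [interior_Icc] at hu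
    rw [(hφ u).deriv]
    exact mul_nonneg_of_nonpos_of_nonpos (sub_nonpos.2 (hU hu.1.le)) (hf' u hu.2.le)

theorem mem_entropySet_of_le {f : ℝ → ℝ} {c uB u₀ : ℝ} (hf : Differentiable ℝ f)
    (hf' : ∀ u ≤ c, deriv f u ≤ 0) (huB : uB ≤ c) (hu₀ : u₀ ≤ c) :
    u₀ ∈ entropySet f uB := fun _ _ hU hU'' hF hFU =>
  entropy_flux_le_of_deriv_nonpos hf hF hFU
    (monotone_of_deriv_nonneg hU.differentiable_deriv_two hU'') hf' huB hu₀

theorem contDiff_succ_integral {g : ℝ → ℝ} {n : ℕ} (hg : ContDiff ℝ n g) (a : ℝ) :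
    ContDiff ℝ (n + 1) fun u => ∫ x in a..u, g x := by
  refine contDiff_succ_iff_deriv.2 ⟨differentiable_integral_of_continuous hg.continuous,
    by simp, ?_⟩
  rwa [funext (hg.continuous.deriv_integral g a)]

theorem notMem_entropySet_of_lt {f : ℝ → ℝ} {c uB u₀ : ℝ} (hf' : Continuous (deriv f))
    (hf'_pos : ∀ u, c < u → 0 < deriv f u) (huB : uB ≤ c) (hu₀ : c < u₀) :
    u₀ ∉ entropySet f uB := by
  set g : ℝ → ℝ := fun s => expNegInvGlue (s - c)
  have hg : ContDiff ℝ 1 g := expNegInvGlue.contDiff.comp (contDiff_id.sub contDiff_const)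
  have hgf : Continuous fun s => g s * deriv f s := hg.continuous.mul hf'
  set U : ℝ → ℝ := fun u => ∫ s in c..u, g s
  set F : ℝ → ℝ := fun u => ∫ s in c..u, g s * deriv f s
  have hU' : deriv U = g := funext (hg.continuous.deriv_integral g c)
  have hF' : deriv F = fun u => g u * deriv f u := funext (hgf.deriv_integral _ c)
  have hg_zero : ∀ s ≤ c, g s = 0 := fun s hs => expNegInvGlue.zero_of_nonpos (by linarith)
  have hF_uB : F uB = 0 := by
    refine (integral_congr fun s hs => ?_).trans integral_zero
    rw [uIcc_of_ge huB] at hs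
    simp [hg_zero s hs.2]
  have hF_u₀ : 0 < F u₀ :=
    intervalIntegral_pos_of_pos_on (hgf.intervalIntegrable _ _) (fun s hs =>
      mul_pos (expNegInvGlue.pos_of_pos (sub_pos.2 hs.1)) (hf'_pos s hs.1)) hu₀
  intro h
  have hU2 : ContDiff ℝ 2 U := contDiff_succ_integral hg c
  have := h U F hU2 (fun u => by rw [hU']; exact (expNegInvGlue.monotone.comp
      fun _ _ h => sub_le_sub_right h c).deriv_nonneg)
    (differentiable_integral_of_continuous hgf) (fun u => by rw [hU', hF'])
  rw [hU', hF_uB, hg_zero uB huB] at this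
  linarith

theorem entropySet_eq_of_subcritical
    (f : ℝ → ℝ) (hf : ContDiff ℝ 2 f) (hf'' : ∀ u, 0 < deriv (deriv f) u)
    (ustar : ℝ) (hstar : deriv f ustar = 0)
    (uB : ℝ) (huB : uB ≤ ustar) :
    entropySet f uB = Set.Iic ustar := by
  have hf' : StrictMono (deriv f) := strictMono_of_deriv_pos hf''
  ext u₀
  rw [mem_Iic]
  refine ⟨fun h => not_lt.1 fun hu₀ => ?_, fun hu₀ => ?_⟩
  · exact notMem_entropySet_of_lt (hf.continuous_deriv one_le_two)
      (fun u hu => hstar ▸ hf' hu) huB hu₀ h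
  · exact mem_entropySet_of_le (hf.differentiable two_ne_zero)
      (fun u hu => hstar ▸ hf'.monotone hu) huB hu₀
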